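/- Let $b > e$ and $\sigma, d > 0$. Define $\tilde{b} = b(2\pi/\sigma)^{-d/2}$ and $\tilde{u} = \frac{\log \tilde{b}}{\sigma} + \frac{d}{2\sigma}\log\left(\frac{\log \tilde{b}}{\sigma}\right) + \left(\frac{d}{2}\right)^2 \frac{\log((\log \tilde{b})/\sigma)}{\sigma \log \tilde{b}}$. Let $u$ be the solution of $(2\pi/\sigma)^{d/2} u^{-d/2} e^{\sigma u} = b$ for large $b$. Then $u - \tilde{u} = o(u^{-1})$ as $b \to \infty$. -/

import Mathlib

/-!
Taking logarithms, the defining equation becomes `u = x + k log u` with `x = log b̃ / σ` and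
`k = d / (2σ)`; on the branch `u > k` this forces `u ≥ x + k log k → ∞`.
Moreover `ũ = x + k log x + k² log x / x`. Eliminating `x` gives the exact identity
`u (u - ũ) = k u (log (u/x) - (u/x - 1)) + k² (u/x) log (u/x)`. Since `u/x - 1 = k log u / x`
and `u/x → 1`, the first term is `O(k² (log u)² / u)` by the quadratic Taylor bound for `log`
at `1`, and the second tends to `1 · log 1 = 0`.
-/

open Real Filter Topology Asymptotics

theorem Real.isBigO_log_sub_sub_one :
    (fun y => log y - (y - 1)) =O[𝓝 1] fun y => (y - 1) ^ 2 := by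
  refine isBigO_iff.2 ⟨2, ?_⟩
  filter_upwards [eventually_abs_sub_lt 1 (by norm_num : (0 : ℝ) < 1 / 2)] with y hy
  rw [abs_sub_comm] at hy
  have hsmall : (0 : ℝ) < 1 - |1 - y| := by linarith
  have htaylor := abs_log_sub_add_sum_range_le (hy.trans (by norm_num)) 1
  simp only [Finset.sum_range_one, zero_add, pow_one, Nat.cast_zero, div_one, sub_sub_cancel,
    one_add_one_eq_two] at htaylor
  rw [norm_eq_abs, norm_eq_abs, abs_pow, ← abs_sub_comm 1 y]
  calc |log y - (y - 1)| = |1 - y + log y| := by ring_nf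
    _ ≤ |1 - y| ^ 2 / (1 - |1 - y|) := htaylor
    _ ≤ 2 * |1 - y| ^ 2 := by
      rw [div_le_iff₀ hsmall]
      nlinarith [sq_nonneg (1 - y), abs_nonneg (1 - y)]

section LambertAsymptotics

variable {α : Type*} {l : Filter α} {u x : α → ℝ} {k : ℝ}

theorem tendsto_atTop_of_eq_add_mul_log (hk : 0 ≤ k)
    (hu : ∀ᶠ b in l, k ≤ u b ∧ u b = x b + k * log (u b)) (hx : Tendsto x l atTop) :
    Tendsto u l atTop := by
  refine tendsto_atTop_mono' l ?_ (tendsto_atTop_add_const_right l (k * log k) hx)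
  filter_upwards [hu] with b ⟨hku, hub⟩
  have hlog : k * log k ≤ k * log (u b) := by
    rcases hk.eq_or_lt with rfl | hk
    · simp
    · exact mul_le_mul_of_nonneg_left (log_le_log hk hku) hk.le
  linarith

theorem tendsto_log_pow_div_of_tendsto_atTop (hu : Tendsto u l atTop) (n : ℕ) :
    Tendsto (fun b => log (u b) ^ n / u b) l (𝓝 0) :=
  (isLittleO_pow_log_id_atTop.tendsto_div_nhds_zero).comp hu

theorem tendsto_div_of_eq_add_mul_log (hu : ∀ᶠ b in l, u b = x b + k * log (u b))
    (hU : Tendsto u l atTop) : Tendsto (fun b => u b / x b) l (𝓝 1) := by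
  have hxu : Tendsto (fun b => x b / u b) l (𝓝 1) := by
    have h := tendsto_const_nhds (x := (1 : ℝ)) |>.sub
      ((tendsto_log_pow_div_of_tendsto_atTop hU 1).const_mul k)
    rw [mul_zero, sub_zero] at h
    refine h.congr' ?_
    filter_upwards [hu, hU.eventually_gt_atTop 0] with b hub hu0
    field_simp
    linarith
  simpa using hxu.inv₀ one_ne_zero

theorem tendsto_mul_sub_of_eq_add_mul_log (hu : ∀ᶠ b in l, u b = x b + k * log (u b))
    (hU : Tendsto u l atTop) :
    Tendsto (fun b => u b * (u b - (x b + k * log (x b) + k ^ 2 * log (x b) / x b))) l (𝓝 0) := by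
  have hux := tendsto_div_of_eq_add_mul_log hu hU
  have hx0 : ∀ᶠ b in l, x b ≠ 0 := by
    filter_upwards [hux.eventually_ne one_ne_zero] with b hb hx
    simp [hx] at hb
  have hTaylor : Tendsto (fun b => u b * (log (u b / x b) - (u b / x b - 1))) l (𝓝 0) := by
    refine ((isBigO_refl u l).mul (isBigO_log_sub_sub_one.comp_tendsto hux)).trans_tendsto ?_
    have := ((hux.pow 2).mul (tendsto_log_pow_div_of_tendsto_atTop hU 2)).const_mul (k ^ 2)
    rw [mul_zero, mul_zero] at this
    refine this.congr' ?_
    filter_upwards [hu, hx0, hU.eventually_gt_atTop 0] with b hub hxb hu0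
    simp only [Function.comp_apply]
    rw [div_sub_one hxb, show u b - x b = k * log (u b) by linarith]
    field_simp
  have hLog : Tendsto (fun b => u b / x b * log (u b / x b)) l (𝓝 0) := by
    simpa using hux.mul (hux.log one_ne_zero)
  have := (hTaylor.const_mul k).add (hLog.const_mul (k ^ 2))
  rw [mul_zero, mul_zero, add_zero] at this
  refine this.congr' ?_
  filter_upwards [hu, hx0, hU.eventually_gt_atTop 0] with b hub hxb hu0
  rw [log_div hu0.ne' hxb]
  field_simp
  linear_combination (-(x b + k)) * hub

end LambertAsymptotics

theorem eq_log_div_add_mul_log_of_rpow_mul_exp_eq {a σ d u b : ℝ} (ha : 0 < a) (hσ : σ ≠ 0)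
    (hu : 0 < u) (h : a ^ (d / 2) * u ^ (-d / 2) * exp (σ * u) = b) :
    u = log (b * a ^ (-d / 2)) / σ + d / (2 * σ) * log u := by
  subst h
  rw [log_mul (by positivity) (by positivity), log_mul (by positivity) (exp_ne_zero _),
    log_mul (by positivity) (by positivity), log_rpow ha, log_rpow hu, log_exp, log_rpow ha]
  field_simp
  ring

theorem stmt7_general (σ : ℝ) (hσ : 0 < σ) (d : ℕ)
    (u : ℝ → ℝ)
    (hu : ∀ᶠ b : ℝ in atTop, u b > (d : ℝ) / (2 * σ) ∧
      (2 * π / σ) ^ ((d : ℝ) / 2) * u b ^ (-(d : ℝ) / 2) * exp (σ * u b) = b)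
    (ut : ℝ → ℝ)
    (hut : ∀ b : ℝ, ut b =
      log (b * (2 * π / σ) ^ (-(d : ℝ) / 2)) / σ
      + (d : ℝ) / (2 * σ) * log (log (b * (2 * π / σ) ^ (-(d : ℝ) / 2)) / σ)
      + ((d : ℝ) / 2) ^ 2 * log (log (b * (2 * π / σ) ^ (-(d : ℝ) / 2)) / σ)
          / (σ * log (b * (2 * π / σ) ^ (-(d : ℝ) / 2)))) :
    Tendsto (fun b => u b * (u b - ut b)) atTop (nhds 0) := by
  set k : ℝ := (d : ℝ) / (2 * σ)
  set x : ℝ → ℝ := fun b => log (b * (2 * π / σ) ^ (-(d : ℝ) / 2)) / σ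
  have hk : 0 ≤ k := by positivity
  have hx : Tendsto x atTop atTop :=
    (tendsto_log_atTop.comp (tendsto_id.atTop_mul_const (by positivity))).atTop_div_const hσ
  have heq : ∀ᶠ b in atTop, k ≤ u b ∧ u b = x b + k * log (u b) := by
    filter_upwards [hu] with b ⟨hku, hb⟩
    exact ⟨hku.le, eq_log_div_add_mul_log_of_rpow_mul_exp_eq (by positivity) hσ.ne'
      (hk.trans_lt hku) hb⟩
  have hut' : ∀ b, ut b = x b + k * log (x b) + k ^ 2 * log (x b) / x b := by
    intro b
    rw [hut b]
    simp only [x, k]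
    field_simp
  have := tendsto_mul_sub_of_eq_add_mul_log (heq.mono fun _ h => h.2)
    (tendsto_atTop_of_eq_add_mul_log hk heq hx)
  simpa only [hut'] using this

theorem stmt7 (σ : ℝ) (hσ : 0 < σ) (d : ℕ) (hd : 1 ≤ d)
    (u : ℝ → ℝ)
    (hu : ∀ᶠ b : ℝ in atTop, u b > (d : ℝ) / (2 * σ) ∧
      (2 * π / σ) ^ ((d : ℝ) / 2) * u b ^ (-(d : ℝ) / 2) * exp (σ * u b) = b)
    (ut : ℝ → ℝ)
    (hut : ∀ b : ℝ, ut b =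
      log (b * (2 * π / σ) ^ (-(d : ℝ) / 2)) / σ
      + (d : ℝ) / (2 * σ) * log (log (b * (2 * π / σ) ^ (-(d : ℝ) / 2)) / σ)
      + ((d : ℝ) / 2) ^ 2 * log (log (b * (2 * π / σ) ^ (-(d : ℝ) / 2)) / σ)
          / (σ * log (b * (2 * π / σ) ^ (-(d : ℝ) / 2)))) :
    Tendsto (fun b => u b * (u b - ut b)) atTop (nhds 0) :=
  stmt7_general σ hσ d u hu ut hut
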